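/- arXiv:2011.10690 — 3 statements merged into one kernel-verified Lean document; each statement's English description precedes it below -/
import Mathlib

section
/- Let (Ω, P) be a probability space with a filtration F₀ ⊆ F₁ ⊆ ⋯ ⊆ Fₙ, and let d₁, …, dₙ be real-valued random variables such that each dₜ is Fₜ-measurable, E[dₜ | Fₜ₋₁] = 0 almost surely, and for every real λ with |λ| < 1/b one has E[exp(λ dₜ) | Fₜ₋₁] ≤ exp(λ²v²/2) almost surely, where v > 0 and b > 0 (with exp(λdₜ) integrable for such λ). Then for every ε ≥ 0, P(|Σₜ₌₁ⁿ dₜ| ≥ n·ε) ≤ 2·exp(−n·min(ε²/(2v²), ε/(2b))). -/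
/-!
Pulling the `ℱ (t - 1)`-measurable factor `exp (λ S_{t-1})` out of a conditional expectation gives
`E exp (λ S_t) ≤ exp (λ² v² / 2) · E exp (λ S_{t-1})` for `|λ| < 1 / b`, so the partial sum `S_n` is
sub-exponential with variance proxy `n v²` and the same scale `b`. A Chernoff bound at
`λ = min (ε / v²) (1 / b)` for `S_n` and `-S_n` then gives the two-sided tail.
The pull-out is done for Lebesgue integrals first, where it needs no integrability; this is what
makes `exp (λ S_t)` integrable.
-/

open MeasureTheory ProbabilityTheory Real Set
open scoped ENNReal

namespace ProbabilityTheory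

variable {Ω : Type*} {m m0 : MeasurableSpace Ω} {P : Measure[m0] Ω}

theorem lintegral_mul_condLExp (hm : m ≤ m0) [SigmaFinite (P.trim hm)] {X g : Ω → ℝ≥0∞}
    (hX : AEMeasurable X P) (hg : Measurable[m] g) :
    ∫⁻ ω, X ω * g ω ∂P = ∫⁻ ω, P⁻[X|m] ω * g ω ∂P := by
  have htrim : (P.withDensity X).trim hm = (P.trim hm).withDensity P⁻[X|m] := by
    refine @Measure.ext _ m _ _ fun s hs => ?_
    rw [trim_measurableSet_eq hm hs, withDensity_apply _ (hm s hs), withDensity_apply _ hs,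
      setLIntegral_condLExp_trim hm _ _ hs]
  calc ∫⁻ ω, X ω * g ω ∂P = ∫⁻ ω, g ω ∂P.withDensity X :=
        (lintegral_withDensity_eq_lintegral_mul₀ hX (hg.mono hm le_rfl).aemeasurable).symm
    _ = ∫⁻ ω, g ω ∂(P.trim hm).withDensity P⁻[X|m] := by rw [← htrim, lintegral_trim hm hg]
    _ = ∫⁻ ω, P⁻[X|m] ω * g ω ∂P.trim hm :=
        lintegral_withDensity_eq_lintegral_mul _ (measurable_condLExp _ _ _) hg
    _ = ∫⁻ ω, P⁻[X|m] ω * g ω ∂P := lintegral_trim hm ((measurable_condLExp _ _ _).mul hg)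

theorem lintegral_ofReal_mul_le_of_condExp_le (hm : m ≤ m0) [IsFiniteMeasure P] {f g : Ω → ℝ}
    {C : ℝ} (hf : Integrable f P) (hf0 : 0 ≤ᵐ[P] f) (hg : Measurable[m] g)
    (hC : ∀ᵐ ω ∂P, P[f|m] ω ≤ C) :
    ∫⁻ ω, ENNReal.ofReal (f ω) * ENNReal.ofReal (g ω) ∂P ≤
      ENNReal.ofReal C * ∫⁻ ω, ENNReal.ofReal (g ω) ∂P := by
  have hg' : Measurable[m] fun ω => ENNReal.ofReal (g ω) := ENNReal.measurable_ofReal.comp hg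
  calc ∫⁻ ω, ENNReal.ofReal (f ω) * ENNReal.ofReal (g ω) ∂P
      = ∫⁻ ω, P⁻[fun ω => ENNReal.ofReal (f ω)|m] ω * ENNReal.ofReal (g ω) ∂P :=
        lintegral_mul_condLExp hm hf.1.aemeasurable.ennreal_ofReal hg'
    _ ≤ ∫⁻ ω, ENNReal.ofReal C * ENNReal.ofReal (g ω) ∂P := by
        refine lintegral_mono_ae ?_
        filter_upwards [condLExp_ofReal m hf hf0, hC] with ω hω hCω
        rw [hω]
        gcongr
    _ = ENNReal.ofReal C * ∫⁻ ω, ENNReal.ofReal (g ω) ∂P :=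
        lintegral_const_mul _ (hg'.mono hm le_rfl)

theorem integrable_mul_of_condExp_le (hm : m ≤ m0) [IsFiniteMeasure P] {f g : Ω → ℝ} {C : ℝ}
    (hf : Integrable f P) (hf0 : 0 ≤ᵐ[P] f) (hg : Measurable[m] g) (hgi : Integrable g P)
    (hg0 : 0 ≤ᵐ[P] g) (hC : ∀ᵐ ω ∂P, P[f|m] ω ≤ C) :
    Integrable (fun ω => g ω * f ω) P := by
  have hfg0 : 0 ≤ᵐ[P] fun ω => g ω * f ω := by
    filter_upwards [hf0, hg0] with ω hfω hgω using mul_nonneg hgω hfω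
  refine ⟨(hg.mono hm le_rfl).aestronglyMeasurable.mul hf.1,
    (hasFiniteIntegral_iff_ofReal hfg0).2 ?_⟩
  calc ∫⁻ ω, ENNReal.ofReal (g ω * f ω) ∂P
      = ∫⁻ ω, ENNReal.ofReal (f ω) * ENNReal.ofReal (g ω) ∂P := by
        refine lintegral_congr_ae ?_
        filter_upwards [hg0] with ω hgω
        rw [ENNReal.ofReal_mul hgω, mul_comm]
    _ ≤ ENNReal.ofReal C * ∫⁻ ω, ENNReal.ofReal (g ω) ∂P :=
        lintegral_ofReal_mul_le_of_condExp_le hm hf hf0 hg hC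
    _ < ∞ := ENNReal.mul_lt_top ENNReal.ofReal_lt_top hgi.lintegral_lt_top

theorem integral_mul_le_of_condExp_le (hm : m ≤ m0) [IsFiniteMeasure P] {f g : Ω → ℝ} {C : ℝ}
    (hf : Integrable f P) (hf0 : 0 ≤ᵐ[P] f) (hg : Measurable[m] g) (hgi : Integrable g P)
    (hg0 : 0 ≤ᵐ[P] g) (hC : ∀ᵐ ω ∂P, P[f|m] ω ≤ C) :
    ∫ ω, g ω * f ω ∂P ≤ C * ∫ ω, g ω ∂P := by
  have hgf := integrable_mul_of_condExp_le hm hf hf0 hg hgi hg0 hC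
  have hpull : P[fun ω => g ω * f ω|m] =ᵐ[P] fun ω => g ω * P[f|m] ω :=
    condExp_mul_of_stronglyMeasurable_left hg.stronglyMeasurable hgf hf
  calc ∫ ω, g ω * f ω ∂P = ∫ ω, g ω * P[f|m] ω ∂P :=
        (integral_condExp hm).symm.trans (integral_congr_ae hpull)
    _ ≤ ∫ ω, g ω * C ∂P := by
        refine integral_mono_ae (integrable_condExp.congr hpull) (hgi.mul_const C) ?_
        filter_upwards [hg0, hC] with ω hgω hCω using mul_le_mul_of_nonneg_left hCω hgω
    _ = C * ∫ ω, g ω ∂P := by rw [integral_mul_const, mul_comm]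

/-- Sub-exponential with parameters `(√c, b)`. -/
def HasSubexponentialMGF (X : Ω → ℝ) (c b : ℝ) (μ : Measure[m0] Ω) : Prop :=
  ∀ t : ℝ, |t| < 1 / b →
    Integrable (fun ω => exp (t * X ω)) μ ∧ mgf X μ t ≤ exp (c * t ^ 2 / 2)

def HasCondSubexponentialMGF (m : MeasurableSpace Ω) (X : Ω → ℝ) (c b : ℝ)
    (μ : Measure[m0] Ω) : Prop :=
  ∀ t : ℝ, |t| < 1 / b → Integrable (fun ω => exp (t * X ω)) μ ∧
    ∀ᵐ ω ∂μ, μ[fun ω' => exp (t * X ω')|m] ω ≤ exp (c * t ^ 2 / 2)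

theorem HasSubexponentialMGF.add_of_hasCondSubexponentialMGF [IsFiniteMeasure P]
    (hm : m ≤ m0) {X Y : Ω → ℝ} {cX cY b : ℝ} (hX : HasSubexponentialMGF X cX b P)
    (hXm : Measurable[m] X) (hY : HasCondSubexponentialMGF m Y cY b P) :
    HasSubexponentialMGF (fun ω => X ω + Y ω) (cX + cY) b P := by
  intro t ht
  obtain ⟨hXi, hXmgf⟩ := hX t ht
  obtain ⟨hYi, hYcond⟩ := hY t ht
  have hexp : (fun ω => exp (t * (X ω + Y ω))) = fun ω => exp (t * X ω) * exp (t * Y ω) := by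
    simp only [mul_add, exp_add]
  have hg : Measurable[m] fun ω => exp (t * X ω) := (hXm.const_mul t).exp
  have hpos : ∀ Z : Ω → ℝ, 0 ≤ᵐ[P] fun ω => exp (t * Z ω) :=
    fun Z => ae_of_all _ fun ω => (exp_pos _).le
  refine ⟨hexp ▸ integrable_mul_of_condExp_le hm hYi (hpos Y) hg hXi (hpos X) hYcond, ?_⟩
  calc mgf (fun ω => X ω + Y ω) P t = ∫ ω, exp (t * X ω) * exp (t * Y ω) ∂P := by
        rw [mgf, hexp]
    _ ≤ exp (cY * t ^ 2 / 2) * mgf X P t :=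
        integral_mul_le_of_condExp_le hm hYi (hpos Y) hg hXi (hpos X) hYcond
    _ ≤ exp (cY * t ^ 2 / 2) * exp (cX * t ^ 2 / 2) := by gcongr
    _ = exp ((cX + cY) * t ^ 2 / 2) := by rw [← exp_add]; ring_nf

theorem hasSubexponentialMGF_sum_Icc [IsProbabilityMeasure P] {ℱ : Filtration ℕ m0}
    {d : ℕ → Ω → ℝ} {c b : ℝ} {n : ℕ}
    (hadapted : ∀ t ∈ Finset.Icc 1 n, Measurable[ℱ t] (d t))
    (hcond : ∀ t ∈ Finset.Icc 1 n, HasCondSubexponentialMGF (ℱ (t - 1)) (d t) c b P) :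
    HasSubexponentialMGF (fun ω => ∑ t ∈ Finset.Icc 1 n, d t ω) (n * c) b P := by
  induction n with
  | zero => intro t _; simp [mgf]
  | succ n ih =>
    have hmem : ∀ t ∈ Finset.Icc 1 n, t ∈ Finset.Icc 1 (n + 1) := fun t ht => by
      simp only [Finset.mem_Icc] at ht ⊢; omega
    have hsum_meas : Measurable[ℱ n] fun ω => ∑ t ∈ Finset.Icc 1 n, d t ω :=
      Finset.measurable_sum _ fun t ht =>
        (hadapted t (hmem t ht)).mono (ℱ.mono (Finset.mem_Icc.1 ht).2) le_rfl
    have hlast : n + 1 ∈ Finset.Icc 1 (n + 1) := by simp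
    have hsplit : (fun ω => ∑ t ∈ Finset.Icc 1 (n + 1), d t ω)
        = fun ω => (∑ t ∈ Finset.Icc 1 n, d t ω) + d (n + 1) ω :=
      funext fun ω => Finset.sum_Icc_succ_top (by omega) _
    rw [hsplit, Nat.cast_succ, add_one_mul]
    exact (ih (fun t ht => hadapted t (hmem t ht)) fun t ht => hcond t (hmem t ht))
      |>.add_of_hasCondSubexponentialMGF (ℱ.le n) hsum_meas (hcond (n + 1) hlast)

theorem neg_mul_add_mul_sq_le_neg_min {c b ε : ℝ} (hc : 0 ≤ c) (hb : 0 < b) (hε : 0 ≤ ε) :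
    -min (ε / c) (1 / b) * ε + c * min (ε / c) (1 / b) ^ 2 / 2 ≤
      -min (ε ^ 2 / (2 * c)) (ε / (2 * b)) := by
  rcases hc.eq_or_lt with rfl | hc
  · simp [min_eq_left (div_nonneg hε (by positivity : (0 : ℝ) ≤ 2 * b)),
      min_eq_left (inv_pos.2 hb).le]
  rcases le_total (ε / c) (1 / b) with h | h
  · have hval : -(ε / c) * ε + c * (ε / c) ^ 2 / 2 = -(ε ^ 2 / (2 * c)) := by
      field_simp; ring
    rw [min_eq_left h, hval]
    linarith [min_le_left (ε ^ 2 / (2 * c)) (ε / (2 * b))]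
  · have hcb : c / b ≤ ε := by
      rw [div_le_div_iff₀ hb hc] at h
      rw [div_le_iff₀ hb]; linarith
    have hval : -(1 / b) * ε + c * (1 / b) ^ 2 / 2 = -(ε / b) + c / b / (2 * b) := by
      field_simp
    have hle : c / b / (2 * b) ≤ ε / (2 * b) := by gcongr
    rw [min_eq_right h, hval]
    have hhalf : ε / b = 2 * (ε / (2 * b)) := by field_simp
    linarith [min_le_right (ε ^ 2 / (2 * c)) (ε / (2 * b))]

theorem HasSubexponentialMGF.measure_ge_le [IsFiniteMeasure P] {X : Ω → ℝ} {c b ε : ℝ}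
    (h : HasSubexponentialMGF X c b P) (hc : 0 ≤ c) (hb : 0 < b) (hε : 0 ≤ ε) :
    P {ω | ε ≤ X ω} ≤ ENNReal.ofReal (exp (-min (ε ^ 2 / (2 * c)) (ε / (2 * b)))) := by
  have hchernoff : Ico 0 (1 / b) ⊆ {t | P.real {ω | ε ≤ X ω} ≤ exp (-t * ε + c * t ^ 2 / 2)} := by
    intro t ⟨ht0, htb⟩
    obtain ⟨hint, hmgf⟩ := h t (by rwa [abs_of_nonneg ht0])
    calc P.real {ω | ε ≤ X ω} ≤ exp (-t * ε) * mgf X P t := measure_ge_le_exp_mul_mgf ε ht0 hint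
      _ ≤ exp (-t * ε) * exp (c * t ^ 2 / 2) := by gcongr
      _ = exp (-t * ε + c * t ^ 2 / 2) := (exp_add _ _).symm
  -- the Chernoff bound extends by continuity to the endpoint `t = 1 / b`, excluded in `h`
  have hIcc : Icc 0 (1 / b) ⊆ {t | P.real {ω | ε ≤ X ω} ≤ exp (-t * ε + c * t ^ 2 / 2)} := by
    rw [← closure_Ico (one_div_pos.2 hb).ne]
    exact closure_minimal hchernoff (isClosed_le continuous_const (by fun_prop))
  have ht : min (ε / c) (1 / b) ∈ Icc 0 (1 / b) :=
    ⟨le_min (div_nonneg hε hc) (one_div_pos.2 hb).le, min_le_right _ _⟩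
  rw [← ofReal_measureReal]
  exact ENNReal.ofReal_le_ofReal
    ((hIcc ht).trans (exp_le_exp.2 (neg_mul_add_mul_sq_le_neg_min hc hb hε)))

theorem HasSubexponentialMGF.neg {X : Ω → ℝ} {c b : ℝ} (h : HasSubexponentialMGF X c b P) :
    HasSubexponentialMGF (fun ω => -X ω) c b P := by
  intro t ht
  obtain ⟨hint, hmgf⟩ := h (-t) (by rwa [abs_neg])
  simp only [mul_neg, ← neg_mul]
  refine ⟨hint, ?_⟩
  rw [← neg_sq]
  exact mgf_neg.trans_le hmgf

theorem HasSubexponentialMGF.measure_abs_ge_le [IsFiniteMeasure P] {X : Ω → ℝ} {c b ε : ℝ}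
    (h : HasSubexponentialMGF X c b P) (hc : 0 ≤ c) (hb : 0 < b) (hε : 0 ≤ ε) :
    P {ω | ε ≤ |X ω|} ≤ ENNReal.ofReal (2 * exp (-min (ε ^ 2 / (2 * c)) (ε / (2 * b)))) := by
  calc P {ω | ε ≤ |X ω|} ≤ P ({ω | ε ≤ X ω} ∪ {ω | ε ≤ -X ω}) :=
        measure_mono fun ω (hω : ε ≤ |X ω|) => show ε ≤ X ω ∨ ε ≤ -X ω from le_abs.1 hω
    _ ≤ P {ω | ε ≤ X ω} + P {ω | ε ≤ -X ω} := measure_union_le _ _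
    _ ≤ ENNReal.ofReal (exp (-min (ε ^ 2 / (2 * c)) (ε / (2 * b)))) +
          ENNReal.ofReal (exp (-min (ε ^ 2 / (2 * c)) (ε / (2 * b)))) :=
        add_le_add (h.measure_ge_le hc hb hε) (h.neg.measure_ge_le hc hb hε)
    _ = ENNReal.ofReal (2 * exp (-min (ε ^ 2 / (2 * c)) (ε / (2 * b)))) := by
        rw [← ENNReal.ofReal_add (exp_pos _).le (exp_pos _).le, ← two_mul]

end ProbabilityTheory

theorem martingale_difference_subexponential_concentration_general
    {Ω : Type*} {m0 : MeasurableSpace Ω} (P : Measure Ω) [IsProbabilityMeasure P]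
    (n : ℕ) (ℱ : Filtration ℕ m0) (d : ℕ → Ω → ℝ)
    (hAdapted : ∀ t ∈ Finset.Icc 1 n, Measurable[ℱ t] (d t))
    (v b : ℝ) (hb : 0 < b)
    (hInt : ∀ t ∈ Finset.Icc 1 n, ∀ l : ℝ, |l| < 1 / b →
      Integrable (fun ω => Real.exp (l * d t ω)) P)
    (hMGF : ∀ t ∈ Finset.Icc 1 n, ∀ l : ℝ, |l| < 1 / b →
      ∀ᵐ ω ∂P, (P[fun ω' => Real.exp (l * d t ω') | ℱ (t - 1)]) ω ≤
        Real.exp (l ^ 2 * v ^ 2 / 2)) :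
    ∀ ε : ℝ, 0 ≤ ε →
      P {ω | (n : ℝ) * ε ≤ |∑ t ∈ Finset.Icc 1 n, d t ω|} ≤
        ENNReal.ofReal
          (2 * Real.exp (-(n : ℝ) * min (ε ^ 2 / (2 * v ^ 2)) (ε / (2 * b)))) := by
  intro ε hε
  have hcond : ∀ t ∈ Finset.Icc 1 n, HasCondSubexponentialMGF (ℱ (t - 1)) (d t) (v ^ 2) b P :=
    fun t ht l hl => ⟨hInt t ht l hl, (hMGF t ht l hl).mono fun ω hω => hω.trans_eq (by ring_nf)⟩
  have hexponent : min ((n * ε) ^ 2 / (2 * (n * v ^ 2))) (n * ε / (2 * b)) =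
      n * min (ε ^ 2 / (2 * v ^ 2)) (ε / (2 * b)) := by
    rcases eq_or_ne (n : ℝ) 0 with hn | hn
    · simp [hn]
    · rw [mul_min_of_nonneg _ _ n.cast_nonneg]
      congr 1 <;> field_simp
  have htail := (hasSubexponentialMGF_sum_Icc hAdapted hcond).measure_abs_ge_le (by positivity) hb
    (mul_nonneg n.cast_nonneg hε)
  rwa [hexponent, ← neg_mul] at htail

/-- Azuma–Bernstein-type concentration inequality for martingale-difference
sequences with conditionally sub-exponential increments. -/
theorem martingale_difference_subexponential_concentration
    {Ω : Type*} {m0 : MeasurableSpace Ω} (P : Measure Ω) [IsProbabilityMeasure P]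
    (n : ℕ) (ℱ : Filtration ℕ m0) (d : ℕ → Ω → ℝ)
    (hAdapted : ∀ t ∈ Finset.Icc 1 n, Measurable[ℱ t] (d t))
    (hMDS : ∀ t ∈ Finset.Icc 1 n, P[d t | ℱ (t - 1)] =ᵐ[P] 0)
    (v b : ℝ) (hv : 0 < v) (hb : 0 < b)
    (hInt : ∀ t ∈ Finset.Icc 1 n, ∀ l : ℝ, |l| < 1 / b →
      Integrable (fun ω => Real.exp (l * d t ω)) P)
    (hMGF : ∀ t ∈ Finset.Icc 1 n, ∀ l : ℝ, |l| < 1 / b →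
      ∀ᵐ ω ∂P, (P[fun ω' => Real.exp (l * d t ω') | ℱ (t - 1)]) ω ≤
        Real.exp (l ^ 2 * v ^ 2 / 2)) :
    ∀ ε : ℝ, 0 ≤ ε →
      P {ω | (n : ℝ) * ε ≤ |∑ t ∈ Finset.Icc 1 n, d t ω|} ≤
        ENNReal.ofReal
          (2 * Real.exp (-(n : ℝ) * min (ε ^ 2 / (2 * v ^ 2)) (ε / (2 * b)))) :=
  martingale_difference_subexponential_concentration_general P n ℱ d hAdapted v b hb hInt hMGF
end

section
/- Let (Ω, P) be a probability space and X₁, …, Xₙ independent real-valued random variables, each with mean μ(θ⁰) and each satisfying E[exp(λ(Xᵢ − μ(θ⁰)))] ≤ exp(λ²v²/2) for all real λ with |λ| < 1/b, where v > 0 and b > 0 (with exp(λ(Xᵢ − μ(θ⁰))) integrable for such λ). Let Θ be a finite set with θ⁰ ∈ Θ and μ : Θ → ℝ, and let c > 0 satisfy |μ(θ) − μ(θ⁰)| ≥ c for every θ ≠ θ⁰. Define Ψ(c) := min(c²/(8v²), c/(4b)), let M > 0 and T > 0 be reals with 2MTΨ(c) ≥ e, set L := log(2MTΨ(c)), and suppose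 n > L/Ψ(c). Define Φ := max(√(2v²L/n), 2bL/n) and the empirical mean S̄ := (1/n)·Σᵢ₌₁ⁿ Xᵢ. Then P({θ ∈ Θ : |S̄ − μ(θ)| ≤ Φ} = {θ⁰}) ≥ 1 − 1/(MTΨ(c)). -/
/-!
The centred observations are sub-exponential, hence so is their sum, with variance proxy
`n v²`. Optimizing the Chernoff bound over `t ∈ [0, 1/b]` shows that the empirical mean is at
least `Φ` away from `μ θ⁰` with probability at most `2 exp (-L) = 1 / (M T Ψ)`. Otherwise every
model in the ambiguity set is within `Φ` of it, and `n > L / Ψ` makes `2 Φ < c`, so the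
separation of the means leaves only `θ⁰`.
-/

open MeasureTheory Real ProbabilityTheory Set

namespace ProbabilityTheory

variable {Ω ι : Type*} [MeasurableSpace Ω] {μ : Measure Ω} {X : Ω → ℝ} {σ b : ℝ}

/-- Sub-exponential with variance proxy `σ` (the paper's `v²`) and scale `b`. Integrability is
part of the definition because `mgf` is `0` where the exponential moment is not integrable. -/
def HasSubexpMGF (X : Ω → ℝ) (σ b : ℝ) (μ : Measure Ω) : Prop :=
  ∀ t : ℝ, |t| < 1 / b →
    Integrable (fun ω ↦ exp (t * X ω)) μ ∧ mgf X μ t ≤ exp (t ^ 2 * σ / 2)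

namespace HasSubexpMGF

lemma neg (h : HasSubexpMGF X σ b μ) : HasSubexpMGF (-X) σ b μ := by
  intro t ht
  obtain ⟨hint, hmgf⟩ := h (-t) (by rwa [abs_neg])
  refine ⟨by simpa only [Pi.neg_apply, mul_neg, neg_mul] using hint, ?_⟩
  rwa [mgf_neg, ← neg_sq]

lemma sum_of_iIndepFun {X : ι → Ω → ℝ} (h_indep : iIndepFun X μ)
    (h_meas : ∀ i, Measurable (X i)) {σ : ι → ℝ} {s : Finset ι}
    (h_subexp : ∀ i ∈ s, HasSubexpMGF (X i) (σ i) b μ) :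
    HasSubexpMGF (fun ω ↦ ∑ i ∈ s, X i ω) (∑ i ∈ s, σ i) b μ := by
  have := h_indep.isProbabilityMeasure
  intro t ht
  have h_sum : (fun ω ↦ ∑ i ∈ s, X i ω) = ∑ i ∈ s, X i := by
    ext ω; rw [Finset.sum_apply]
  rw [h_sum]
  refine ⟨h_indep.integrable_exp_mul_sum h_meas fun i hi ↦ (h_subexp i hi t ht).1, ?_⟩
  calc mgf (∑ i ∈ s, X i) μ t = ∏ i ∈ s, mgf (X i) μ t := h_indep.mgf_sum h_meas s
    _ ≤ ∏ i ∈ s, exp (t ^ 2 * σ i / 2) :=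
        Finset.prod_le_prod (fun _ _ ↦ mgf_nonneg) fun i hi ↦ (h_subexp i hi t ht).2
    _ = exp (t ^ 2 * (∑ i ∈ s, σ i) / 2) := by
        rw [← exp_sum, Finset.mul_sum, Finset.sum_div]

variable [IsFiniteMeasure μ]

/-- The MGF bound only holds for `t < 1 / b`; the endpoint `t = 1 / b` follows by continuity. -/
lemma measureReal_ge_le_exp (h : HasSubexpMGF X σ b μ) (hb : 0 < b) (ε : ℝ) {t : ℝ}
    (ht : t ∈ Icc 0 (1 / b)) :
    μ.real {ω | ε ≤ X ω} ≤ exp (-t * ε + t ^ 2 * σ / 2) := by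
  have h_lt : ∀ t ∈ Ico 0 (1 / b), μ.real {ω | ε ≤ X ω} ≤ exp (-t * ε + t ^ 2 * σ / 2) := by
    rintro t ⟨ht0, htb⟩
    obtain ⟨hint, hmgf⟩ := h t (by rwa [abs_of_nonneg ht0])
    calc μ.real {ω | ε ≤ X ω} ≤ exp (-t * ε) * mgf X μ t := measure_ge_le_exp_mul_mgf ε ht0 hint
      _ ≤ exp (-t * ε) * exp (t ^ 2 * σ / 2) := by gcongr
      _ = exp (-t * ε + t ^ 2 * σ / 2) := (exp_add _ _).symm
  rw [← closure_Ico (one_div_pos.2 hb).ne] at ht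
  exact ContinuousWithinAt.closure_le ht continuousWithinAt_const (by fun_prop) h_lt

/-- Optimize the Chernoff bound: `t = ε / σ` when it is admissible, `t = 1 / b` otherwise. -/
lemma measureReal_ge_le (h : HasSubexpMGF X σ b μ) (hσ : 0 ≤ σ) (hb : 0 < b) {ε : ℝ}
    (hε : 0 ≤ ε) :
    μ.real {ω | ε ≤ X ω} ≤ exp (-min (ε ^ 2 / (2 * σ)) (ε / (2 * b))) := by
  rcases le_or_gt (ε / σ) (1 / b) with h_gauss | h_exp
  · calc μ.real {ω | ε ≤ X ω} ≤ exp (-(ε / σ) * ε + (ε / σ) ^ 2 * σ / 2) :=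
          h.measureReal_ge_le_exp hb ε ⟨by positivity, h_gauss⟩
      _ = exp (-(ε ^ 2 / (2 * σ))) := by
          congr 1
          rcases hσ.eq_or_lt with rfl | hσ <;> field_simp <;> ring
      _ ≤ exp (-min (ε ^ 2 / (2 * σ)) (ε / (2 * b))) := by gcongr; exact min_le_left _ _
  · have hσ : 0 < σ := hσ.lt_of_ne <| by
      rintro rfl
      rw [div_zero] at h_exp
      linarith [one_div_pos.2 hb]
    have hσε : σ < ε * b := by rwa [div_lt_div_iff₀ hb hσ, one_mul] at h_exp
    calc μ.real {ω | ε ≤ X ω} ≤ exp (-(1 / b) * ε + (1 / b) ^ 2 * σ / 2) :=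
          h.measureReal_ge_le_exp hb ε ⟨by positivity, le_rfl⟩
      _ ≤ exp (-(1 / b) * ε + (1 / b) ^ 2 * (ε * b) / 2) := by gcongr
      _ = exp (-(ε / (2 * b))) := by congr 1; field_simp; ring
      _ ≤ exp (-min (ε ^ 2 / (2 * σ)) (ε / (2 * b))) := by gcongr; exact min_le_right _ _

lemma measureReal_abs_ge_le (h : HasSubexpMGF X σ b μ) (hσ : 0 ≤ σ) (hb : 0 < b) {ε : ℝ}
    (hε : 0 ≤ ε) :
    μ.real {ω | ε ≤ |X ω|} ≤ 2 * exp (-min (ε ^ 2 / (2 * σ)) (ε / (2 * b))) := by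
  have h_union : {ω | ε ≤ |X ω|} = {ω | ε ≤ X ω} ∪ {ω | ε ≤ (-X) ω} := by
    ext ω; exact le_abs (a := ε)
  rw [h_union, two_mul]
  exact (measureReal_union_le _ _).trans
    (add_le_add (h.measureReal_ge_le hσ hb hε) (h.neg.measureReal_ge_le hσ hb hε))

end HasSubexpMGF

end ProbabilityTheory

lemma le_min_sq_div_of_sqrt_le {n v b L Φ : ℝ} (hn : 0 < n) (hv : 0 < v) (hb : 0 < b)
    (hL : 0 ≤ L) (hΦv : √(2 * v ^ 2 * L / n) ≤ Φ) (hΦb : 2 * b * L / n ≤ Φ) :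
    L ≤ min ((n * Φ) ^ 2 / (2 * (n * v ^ 2))) (n * Φ / (2 * b)) := by
  have hsq : 2 * v ^ 2 * L / n ≤ Φ ^ 2 := by
    rw [← sq_sqrt (by positivity : 0 ≤ 2 * v ^ 2 * L / n)]
    exact pow_le_pow_left₀ (sqrt_nonneg _) hΦv 2
  refine le_min ?_ ?_
  · rw [le_div_iff₀ (by positivity)]
    rw [div_le_iff₀ hn] at hsq
    nlinarith
  · rw [le_div_iff₀ (by positivity)]
    rw [div_le_iff₀ hn] at hΦb
    nlinarith

lemma two_mul_max_sqrt_lt {n v b c L : ℝ} (hn : 0 < n) (hv : 0 < v) (hb : 0 < b) (hc : 0 < c)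
    (hL : L < n * min (c ^ 2 / (8 * v ^ 2)) (c / (4 * b))) :
    2 * max (√(2 * v ^ 2 * L / n)) (2 * b * L / n) < c := by
  have hLn : L / n < min (c ^ 2 / (8 * v ^ 2)) (c / (4 * b)) := by
    rwa [div_lt_iff₀ hn, mul_comm]
  have hLv : L / n < c ^ 2 / (8 * v ^ 2) := hLn.trans_le (min_le_left _ _)
  have hLb : L / n < c / (4 * b) := hLn.trans_le (min_le_right _ _)
  have h_sqrt : √(2 * v ^ 2 * L / n) < c / 2 := by
    rw [sqrt_lt' (by positivity)]
    calc 2 * v ^ 2 * L / n = 2 * v ^ 2 * (L / n) := by ring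
      _ < 2 * v ^ 2 * (c ^ 2 / (8 * v ^ 2)) := by gcongr
      _ = (c / 2) ^ 2 := by field_simp; ring
  have h_lin : 2 * b * L / n < c / 2 := by
    calc 2 * b * L / n = 2 * b * (L / n) := by ring
      _ < 2 * b * (c / (4 * b)) := by gcongr
      _ = c / 2 := by field_simp; ring
  linarith [max_lt h_sqrt h_lin]

lemma setOf_abs_sub_le_eq_singleton {Θ : Type*} {μ : Θ → ℝ} {θ₀ : Θ} {c Φ x : ℝ}
    (hsep : ∀ θ, θ ≠ θ₀ → c ≤ |μ θ - μ θ₀|) (hΦ : 2 * Φ < c) (hx : |x - μ θ₀| ≤ Φ) :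
    {θ | |x - μ θ| ≤ Φ} = {θ₀} := by
  refine eq_singleton_iff_unique_mem.2 ⟨hx, fun θ hθ ↦ ?_⟩
  by_contra hne
  have := hsep θ hne
  have := abs_sub_le (μ θ) x (μ θ₀)
  have := abs_sub_comm x (μ θ)
  have hθ : |x - μ θ| ≤ Φ := hθ
  linarith

lemma one_sub_ofReal_le_measure {Ω : Type*} [MeasurableSpace Ω] {P : Measure Ω}
    [IsProbabilityMeasure P] {s t : Set Ω} {r : ℝ} (hst : sᶜ ⊆ t) (hs : P.real s ≤ r) :
    1 - ENNReal.ofReal r ≤ P t := by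
  calc 1 - ENNReal.ofReal r ≤ 1 - P s := by
        gcongr
        rw [← ofReal_measureReal]
        exact ENNReal.ofReal_le_ofReal hs
    _ ≤ P sᶜ := tsub_le_iff_left.2 (measure_univ (μ := P) ▸ measure_univ_le_add_compl s)
    _ ≤ P t := measure_mono hst

theorem ambiguity_set_is_singleton_whp_general
    {Ω : Type*} [MeasurableSpace Ω] (P : Measure Ω) [IsProbabilityMeasure P]
    (n : ℕ) (X : Fin n → Ω → ℝ) (hX : ∀ i, Measurable (X i))
    (hIndep : iIndepFun X P)
    {Θ : Type*} (θ0 : Θ) (μ : Θ → ℝ)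
    (v b : ℝ) (hv : 0 < v) (hb : 0 < b)
    (hInt : ∀ i, ∀ l : ℝ, |l| < 1 / b →
      Integrable (fun ω => Real.exp (l * (X i ω - μ θ0))) P)
    (hMGF : ∀ i, ∀ l : ℝ, |l| < 1 / b →
      (∫ ω, Real.exp (l * (X i ω - μ θ0)) ∂P) ≤ Real.exp (l ^ 2 * v ^ 2 / 2))
    (c : ℝ) (hc : 0 < c) (hsep : ∀ θ : Θ, θ ≠ θ0 → c ≤ |μ θ - μ θ0|)
    (Ψ : ℝ) (hΨ : Ψ = min (c ^ 2 / (8 * v ^ 2)) (c / (4 * b)))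
    (M T : ℝ) (hMT : Real.exp 1 ≤ 2 * M * T * Ψ)
    (L : ℝ) (hL : L = Real.log (2 * M * T * Ψ))
    (hn : (n : ℝ) > L / Ψ)
    (Φ : ℝ) (hΦ : Φ = max (Real.sqrt (2 * v ^ 2 * L / n)) (2 * b * L / n)) :
    P {ω | {θ : Θ | |(1 / (n : ℝ)) * (∑ i, X i ω) - μ θ| ≤ Φ} = {θ0}} ≥
      1 - ENNReal.ofReal (1 / (M * T * Ψ)) := by
  have hΨ_pos : 0 < Ψ := hΨ ▸ lt_min (by positivity) (by positivity)
  have hMTΨ : 0 < 2 * M * T * Ψ := (exp_pos 1).trans_le hMT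
  have hL_nonneg : 0 ≤ L := hL ▸ log_nonneg ((one_le_exp zero_le_one).trans hMT)
  have hLn : L < n * Ψ := by rwa [gt_iff_lt, div_lt_iff₀ hΨ_pos] at hn
  have hn_pos : (0 : ℝ) < n := (div_nonneg hL_nonneg hΨ_pos.le).trans_lt hn
  set S : Ω → ℝ := fun ω ↦ ∑ i, (X i ω - μ θ0) with hS
  have hS_subexp : HasSubexpMGF S (n * v ^ 2) b P := by
    have h := HasSubexpMGF.sum_of_iIndepFun (s := Finset.univ)
      (hIndep.comp (fun _ x ↦ x - μ θ0) fun _ ↦ measurable_sub_const _)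
      (fun i ↦ (hX i).sub_const _) fun i _ l hl ↦ ⟨hInt i l hl, hMGF i l hl⟩
    rwa [Finset.sum_const, Finset.card_univ, Fintype.card_fin, nsmul_eq_mul] at h
  have h_tail : P.real {ω | n * Φ ≤ |S ω|} ≤ 1 / (M * T * Ψ) := by
    calc P.real {ω | n * Φ ≤ |S ω|}
        ≤ 2 * exp (-min ((n * Φ) ^ 2 / (2 * (n * v ^ 2))) (n * Φ / (2 * b))) :=
          hS_subexp.measureReal_abs_ge_le (by positivity) hb (by rw [hΦ]; positivity)
      _ ≤ 2 * exp (-L) := by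
          gcongr
          exact le_min_sq_div_of_sqrt_le hn_pos hv hb hL_nonneg (hΦ ▸ le_max_left _ _)
            (hΦ ▸ le_max_right _ _)
      _ = 1 / (M * T * Ψ) := by
          rw [hL, exp_neg, exp_log hMTΨ]; ring
  have h_good : {ω | n * Φ ≤ |S ω|}ᶜ ⊆
      {ω | {θ : Θ | |(1 / (n : ℝ)) * (∑ i, X i ω) - μ θ| ≤ Φ} = {θ0}} := by
    intro ω hω
    refine setOf_abs_sub_le_eq_singleton hsep
      (hΦ ▸ two_mul_max_sqrt_lt hn_pos hv hb hc (hΨ ▸ hLn)) ?_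
    have : (1 / (n : ℝ)) * (∑ i, X i ω) - μ θ0 = S ω / n := by
      simp only [hS, Finset.sum_sub_distrib, Finset.sum_const, Finset.card_univ, Fintype.card_fin,
        nsmul_eq_mul]
      field_simp
    rw [this, abs_div, abs_of_pos hn_pos, div_le_iff₀ hn_pos, mul_comm]
    exact (not_le.1 (show ¬n * Φ ≤ |S ω| from hω)).le
  exact one_sub_ofReal_le_measure h_good h_tail

/-- Fixed-design version of Theorem 1: once the number of observations exceeds
the demand identification volume `log(2MTΨ(c))/Ψ(c)`, the ambiguity set equals
the singleton `{θ⁰}` with probability at least `1 − 1/(MTΨ(c))`. -/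
theorem ambiguity_set_is_singleton_whp
    {Ω : Type*} [MeasurableSpace Ω] (P : Measure Ω) [IsProbabilityMeasure P]
    (n : ℕ) (X : Fin n → Ω → ℝ) (hX : ∀ i, Measurable (X i))
    (hIndep : iIndepFun X P)
    {Θ : Type*} [Fintype Θ] (θ0 : Θ) (μ : Θ → ℝ)
    (hMean : ∀ i, (∫ ω, X i ω ∂P) = μ θ0)
    (v b : ℝ) (hv : 0 < v) (hb : 0 < b)
    (hInt : ∀ i, ∀ l : ℝ, |l| < 1 / b →
      Integrable (fun ω => Real.exp (l * (X i ω - μ θ0))) P)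
    (hMGF : ∀ i, ∀ l : ℝ, |l| < 1 / b →
      (∫ ω, Real.exp (l * (X i ω - μ θ0)) ∂P) ≤ Real.exp (l ^ 2 * v ^ 2 / 2))
    (c : ℝ) (hc : 0 < c) (hsep : ∀ θ : Θ, θ ≠ θ0 → c ≤ |μ θ - μ θ0|)
    (Ψ : ℝ) (hΨ : Ψ = min (c ^ 2 / (8 * v ^ 2)) (c / (4 * b)))
    (M T : ℝ) (hM : 0 < M) (hT : 0 < T) (hMT : Real.exp 1 ≤ 2 * M * T * Ψ)
    (L : ℝ) (hL : L = Real.log (2 * M * T * Ψ))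
    (hn : (n : ℝ) > L / Ψ)
    (Φ : ℝ) (hΦ : Φ = max (Real.sqrt (2 * v ^ 2 * L / n)) (2 * b * L / n)) :
    P {ω | {θ : Θ | |(1 / (n : ℝ)) * (∑ i, X i ω) - μ θ| ≤ Φ} = {θ0}} ≥
      1 - ENNReal.ofReal (1 / (M * T * Ψ)) :=
  ambiguity_set_is_singleton_whp_general P n X hX hIndep θ0 μ v b hv hb hInt hMGF c hc hsep Ψ hΨ M T
    hMT L hL hn Φ hΦ
end

section
/- Under the setup of the fixed-design identification theorem — (Ω, P) a probability space; X₁, …, Xₙ independent with mean μ(θ⁰) and E[exp(λ(Xᵢ − μ(θ⁰)))] ≤ exp(λ²v²/2) for |λ| < 1/b, v > 0, b > 0; Θ finite with θ⁰ ∈ Θ and μ : Θ → ℝ and |μ(θ) − μ(θ⁰)| ≥ c > 0 for θ ≠ θ⁰; Ψ(c) := min(c²/(8v²), c/(4b)); M, T > 0 with 2MTΨ(c) ≥ e; L := log(2MTΨ(c)) — let c' ≥ c, define Ψ(c') := min(c'²/(8v²), c'/(4b)), and suppose n ≥ L/Ψ(c'). With Φ := max(√(2v²L/n), 2bL/n)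 and S̄ := (1/n)·Σᵢ₌₁ⁿ Xᵢ, it holds that P({θ ∈ Θ : |S̄ − μ(θ)| ≤ Φ} ⊆ {θ⁰} ∪ {θ ∈ Θ : |μ(θ) − μ(θ⁰)| ≤ c'}) ≥ 1 − 1/(MTΨ(c)). -/
/-!
On the event `|S̄ - μ θ0| ≤ Φ`, every `θ` in the ambiguity set satisfies `|μ θ - μ θ0| ≤ 2Φ` by the
triangle inequality, and `n ≥ L / Ψ(c')` forces `2Φ ≤ c'`. The sum of the `n` centred observations
is sub-exponential with parameters `(√n v, b)`, so by the Chernoff bound with parameter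
`min (a / (nv²), 1 / b)` it deviates by `a = nΦ` with probability at most
`2 exp (-min (a² / (2nv²), a / (2b)))`. The threshold `Φ` is chosen so that this exponent is at
least `L`, which makes the bound `2 e^{-L} = 1 / (MTΨ(c))`.
-/

open MeasureTheory Real ProbabilityTheory

/-- Integrability is part of the definition because `mgf` takes the junk value `0` where
`exp (t * Y)` is not integrable. -/
def IsSubExponential {Ω : Type*} [MeasurableSpace Ω] (Y : Ω → ℝ) (P : Measure Ω) (v b : ℝ) :
    Prop :=
  ∀ t : ℝ, |t| < 1 / b →
    Integrable (fun ω => exp (t * Y ω)) P ∧ mgf Y P t ≤ exp (t ^ 2 * v ^ 2 / 2)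

-- `min (a / v²) (1 / b)` is the minimiser `a / v²` of the Chernoff exponent, truncated to the
-- range where the MGF bound holds.
lemma chernoff_exponent_le_neg_min {v b a : ℝ} (hv : v ≠ 0) (hb : 0 < b) :
    min (a / v ^ 2) (1 / b) ^ 2 * v ^ 2 / 2 - min (a / v ^ 2) (1 / b) * a ≤
      -min (a ^ 2 / (2 * v ^ 2)) (a / (2 * b)) := by
  have hv2 : 0 < v ^ 2 := by positivity
  rcases le_total (a / v ^ 2) (1 / b) with h | h
  · rw [min_eq_left h]
    have : (a / v ^ 2) ^ 2 * v ^ 2 / 2 - a / v ^ 2 * a = -(a ^ 2 / (2 * v ^ 2)) := by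
      field_simp; ring
    linarith [min_le_left (a ^ 2 / (2 * v ^ 2)) (a / (2 * b))]
  · rw [min_eq_right h]
    have hvab : v ^ 2 ≤ a * b := by rwa [div_le_div_iff₀ hb hv2, one_mul] at h
    have : (1 / b) ^ 2 * v ^ 2 / 2 - 1 / b * a ≤ -(a / (2 * b)) :=
      calc (1 / b) ^ 2 * v ^ 2 / 2 - 1 / b * a = v ^ 2 / (2 * b ^ 2) - a / b := by ring
        _ ≤ a * b / (2 * b ^ 2) - a / b := by gcongr
        _ = -(a / (2 * b)) := by field_simp; ring
    linarith [min_le_right (a ^ 2 / (2 * v ^ 2)) (a / (2 * b))]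

namespace IsSubExponential

variable {Ω : Type*} [MeasurableSpace Ω] {P : Measure Ω} {Y : Ω → ℝ} {v b : ℝ}

lemma neg (h : IsSubExponential Y P v b) : IsSubExponential (-Y) P v b := by
  intro t ht
  obtain ⟨hint, hmgf⟩ := h (-t) (by rwa [abs_neg])
  refine ⟨by simpa only [Pi.neg_apply, mul_neg, neg_mul] using hint, ?_⟩
  rw [mgf_neg]
  rwa [neg_sq] at hmgf

lemma measureReal_ge_le [IsFiniteMeasure P] (h : IsSubExponential Y P v b) (a : ℝ) {t : ℝ}
    (ht : 0 < t) (htb : t ≤ 1 / b) :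
    P.real {ω | a ≤ Y ω} ≤ exp (t ^ 2 * v ^ 2 / 2 - t * a) := by
  -- The MGF bound is only available for `|t| < 1 / b`; the endpoint is reached from the left.
  have hcont : ContinuousAt (fun s : ℝ => exp (s ^ 2 * v ^ 2 / 2 - s * a)) t := by fun_prop
  refine ge_of_tendsto (hcont.tendsto.mono_left (nhdsWithin_le_nhds (s := Set.Iio t))) ?_
  filter_upwards [Ioo_mem_nhdsLT ht] with s hs
  have hsb : |s| < 1 / b := by rw [abs_of_pos hs.1]; exact hs.2.trans_le htb
  obtain ⟨hint, hmgf⟩ := h s hsb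
  calc P.real {ω | a ≤ Y ω} ≤ exp (-s * a) * mgf Y P s := measure_ge_le_exp_mul_mgf a hs.1.le hint
    _ ≤ exp (-s * a) * exp (s ^ 2 * v ^ 2 / 2) := by gcongr
    _ = exp (s ^ 2 * v ^ 2 / 2 - s * a) := by rw [← exp_add]; ring_nf

lemma measureReal_ge_le_exp_neg_min [IsFiniteMeasure P] (h : IsSubExponential Y P v b)
    (hv : v ≠ 0) (hb : 0 < b) {a : ℝ} (ha : 0 < a) :
    P.real {ω | a ≤ Y ω} ≤ exp (-min (a ^ 2 / (2 * v ^ 2)) (a / (2 * b))) :=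
  (h.measureReal_ge_le a (lt_min (by positivity) (by positivity)) (min_le_right _ _)).trans
    (exp_le_exp.mpr (chernoff_exponent_le_neg_min hv hb))

lemma measureReal_abs_ge_le [IsFiniteMeasure P] (h : IsSubExponential Y P v b)
    (hv : v ≠ 0) (hb : 0 < b) {a : ℝ} (ha : 0 < a) :
    P.real {ω | a ≤ |Y ω|} ≤ 2 * exp (-min (a ^ 2 / (2 * v ^ 2)) (a / (2 * b))) := by
  have hsplit : {ω | a ≤ |Y ω|} = {ω | a ≤ Y ω} ∪ {ω | a ≤ (-Y) ω} := by
    ext ω; simp [le_abs]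
  rw [hsplit, two_mul]
  exact (measureReal_union_le _ _).trans (add_le_add (h.measureReal_ge_le_exp_neg_min hv hb ha)
    (h.neg.measureReal_ge_le_exp_neg_min hv hb ha))

end IsSubExponential

lemma ProbabilityTheory.iIndepFun.isSubExponential_sum {Ω ι : Type*} [MeasurableSpace Ω]
    {P : Measure Ω} [Fintype ι] {Y : ι → Ω → ℝ} {v b : ℝ} (hY : ∀ i, Measurable (Y i))
    (hind : iIndepFun Y P) (h : ∀ i, IsSubExponential (Y i) P v b) :
    IsSubExponential (∑ i, Y i) P (√(Fintype.card ι) * v) b := by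
  have := hind.isProbabilityMeasure
  intro t ht
  refine ⟨hind.integrable_exp_mul_sum hY fun i _ => (h i t ht).1, ?_⟩
  calc mgf (∑ i, Y i) P t = ∏ i, mgf (Y i) P t := hind.mgf_sum hY _
    _ ≤ ∏ _i : ι, exp (t ^ 2 * v ^ 2 / 2) :=
        Finset.prod_le_prod (fun _ _ => mgf_nonneg) fun i _ => (h i t ht).2
    _ = exp (t ^ 2 * (√(Fintype.card ι) * v) ^ 2 / 2) := by
        rw [Finset.prod_const, Finset.card_univ, ← exp_nat_mul, mul_pow, sq_sqrt (by positivity)]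
        ring_nf

lemma one_sub_le_measure_of_compl_subset {Ω : Type*} [MeasurableSpace Ω] {P : Measure Ω}
    [IsProbabilityMeasure P] {s t : Set Ω} (h : sᶜ ⊆ t) : 1 - P s ≤ P t := by
  rw [tsub_le_iff_right, ← measure_univ (μ := P), ← Set.compl_union_self s]
  exact (measure_union_le _ _).trans (by gcongr)

lemma max_sqrt_div_le_half {v b c L n : ℝ} (hv : v ≠ 0) (hb : 0 < b) (hc : 0 ≤ c)
    (h : L / n ≤ min (c ^ 2 / (8 * v ^ 2)) (c / (4 * b))) :
    max (√(2 * v ^ 2 * L / n)) (2 * b * L / n) ≤ c / 2 := by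
  have hv2 : 0 < v ^ 2 := by positivity
  have h₁ := mul_le_mul_of_nonneg_left (h.trans (min_le_left _ _)) (by positivity : 0 ≤ 2 * v ^ 2)
  have h₂ := mul_le_mul_of_nonneg_left (h.trans (min_le_right _ _)) (by positivity : 0 ≤ 2 * b)
  refine max_le (Real.sqrt_le_iff.mpr ⟨by positivity, ?_⟩) ?_
  · calc 2 * v ^ 2 * L / n = 2 * v ^ 2 * (L / n) := by ring
      _ ≤ 2 * v ^ 2 * (c ^ 2 / (8 * v ^ 2)) := h₁
      _ = (c / 2) ^ 2 := by field_simp; ring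
  · calc 2 * b * L / n = 2 * b * (L / n) := by ring
      _ ≤ 2 * b * (c / (4 * b)) := h₂
      _ = c / 2 := by field_simp; ring

lemma le_min_of_max_sqrt_div_le {v b L n Φ : ℝ} (hv : v ≠ 0) (hb : 0 < b) (hn : 0 < n)
    (hΦ : max (√(2 * v ^ 2 * L / n)) (2 * b * L / n) ≤ Φ) :
    L ≤ min ((n * Φ) ^ 2 / (2 * (√n * v) ^ 2)) (n * Φ / (2 * b)) := by
  have hv2 : 0 < v ^ 2 := by positivity
  have hsq : 2 * v ^ 2 * L / n ≤ Φ ^ 2 := (Real.sqrt_le_iff.mp ((le_max_left _ _).trans hΦ)).2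
  have hlin : 2 * b * L / n ≤ Φ := (le_max_right _ _).trans hΦ
  refine le_min ?_ ?_
  · rw [mul_pow, mul_pow, sq_sqrt hn.le, le_div_iff₀ (by positivity)]
    rw [div_le_iff₀ hn] at hsq
    nlinarith
  · rw [le_div_iff₀ (by positivity)]
    rw [div_le_iff₀ hn] at hlin
    linarith

lemma setOf_abs_sub_le_subset {Θ : Type*} (μ : Θ → ℝ) (θ0 : Θ) {s Φ c : ℝ}
    (hs : |s - μ θ0| ≤ Φ) (hc : 2 * Φ ≤ c) :
    {θ | |s - μ θ| ≤ Φ} ⊆ {θ | |μ θ - μ θ0| ≤ c} := fun θ (hθ : |s - μ θ| ≤ Φ) => by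
  calc |μ θ - μ θ0| ≤ |μ θ - s| + |s - μ θ0| := abs_sub_le _ _ _
    _ = |s - μ θ| + |s - μ θ0| := by rw [abs_sub_comm (μ θ)]
    _ ≤ c := by linarith

theorem ambiguity_set_subset_bounding_set_whp_general
    {Ω : Type*} [MeasurableSpace Ω] (P : Measure Ω) [IsProbabilityMeasure P]
    (n : ℕ) (X : Fin n → Ω → ℝ) (hX : ∀ i, Measurable (X i))
    (hIndep : iIndepFun X P)
    {Θ : Type*} (θ0 : Θ) (μ : Θ → ℝ)
    (v b : ℝ) (hv : 0 < v) (hb : 0 < b)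
    (hInt : ∀ i, ∀ l : ℝ, |l| < 1 / b →
      Integrable (fun ω => Real.exp (l * (X i ω - μ θ0))) P)
    (hMGF : ∀ i, ∀ l : ℝ, |l| < 1 / b →
      (∫ ω, Real.exp (l * (X i ω - μ θ0)) ∂P) ≤ Real.exp (l ^ 2 * v ^ 2 / 2))
    (c : ℝ) (hc : 0 < c)
    (Ψ : ℝ)
    (M T : ℝ) (hMT : Real.exp 1 ≤ 2 * M * T * Ψ)
    (L : ℝ) (hL : L = Real.log (2 * M * T * Ψ))
    (c' : ℝ) (hc' : c ≤ c')
    (Ψ' : ℝ) (hΨ' : Ψ' = min (c' ^ 2 / (8 * v ^ 2)) (c' / (4 * b)))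
    (hn : (n : ℝ) ≥ L / Ψ')
    (Φ : ℝ) (hΦ : Φ = max (Real.sqrt (2 * v ^ 2 * L / n)) (2 * b * L / n)) :
    P {ω | {θ : Θ | |(1 / (n : ℝ)) * (∑ i, X i ω) - μ θ| ≤ Φ} ⊆
        {θ0} ∪ {θ : Θ | |μ θ - μ θ0| ≤ c'}} ≥
      1 - ENNReal.ofReal (1 / (M * T * Ψ)) := by
  have hMTΨ : 0 < 2 * M * T * Ψ := (exp_pos 1).trans_le hMT
  have hLpos : 0 < L := hL ▸ log_pos ((one_lt_exp_iff.mpr one_pos).trans_le hMT)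
  have hc'pos : 0 < c' := hc.trans_le hc'
  have hΨ'pos : 0 < Ψ' := hΨ' ▸ lt_min (by positivity) (by positivity)
  have hn0 : (0 : ℝ) < n := (div_pos hLpos hΨ'pos).trans_le hn
  have hΦc : 2 * Φ ≤ c' := by
    linarith [hΦ ▸ max_sqrt_div_le_half hv.ne' hb hc'pos.le (hΨ' ▸ (div_le_comm₀ hΨ'pos hn0).mp hn)]
  have hΦpos : 0 < Φ := hΦ ▸ lt_max_of_lt_right (by positivity)
  set D : Fin n → Ω → ℝ := fun i ω => X i ω - μ θ0
  have hD : IsSubExponential (∑ i, D i) P (√n * v) b := by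
    simpa only [Fintype.card_fin] using (hIndep.comp (fun _ x => x - μ θ0)
      fun _ => measurable_id.sub_const _).isSubExponential_sum (Y := D)
      (fun i => (hX i).sub_const _) fun i t ht => ⟨hInt i t ht, hMGF i t ht⟩
  have htail : P.real {ω | n * Φ ≤ |(∑ i, D i) ω|} ≤ 1 / (M * T * Ψ) := by
    refine (hD.measureReal_abs_ge_le (by positivity) hb (by positivity)).trans ?_
    calc 2 * exp (-min _ _) ≤ 2 * exp (-L) := by
          gcongr; exact le_min_of_max_sqrt_div_le hv.ne' hb hn0 hΦ.ge
      _ = 1 / (M * T * Ψ) := by rw [exp_neg, hL, exp_log hMTΨ]; field_simp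
  refine (tsub_le_tsub_left ?_ 1).trans
    (one_sub_le_measure_of_compl_subset (s := {ω | n * Φ ≤ |(∑ i, D i) ω|}) ?_)
  · rw [← ofReal_measureReal]
    exact ENNReal.ofReal_le_ofReal htail
  · intro ω hω
    have hmean : (1 / (n : ℝ)) * (∑ i, X i ω) - μ θ0 = (∑ i, D i) ω / n := by
      simp only [D, Finset.sum_apply, Finset.sum_sub_distrib, Finset.sum_const, Finset.card_univ,
        Fintype.card_fin, nsmul_eq_mul]
      field_simp
    have hclose : |(1 / (n : ℝ)) * (∑ i, X i ω) - μ θ0| ≤ Φ := by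
      rw [hmean, abs_div, abs_of_pos hn0, div_le_iff₀ hn0]
      linarith [not_le.mp (Set.notMem_ofPred_iff.mp hω)]
    exact (setOf_abs_sub_le_subset μ θ0 hclose hΦc).trans Set.subset_union_right

/-- Fixed-design version of Theorem 2: once the data volume reaches
`log(2MTΨ(c))/Ψ(c')`, all candidate models farther than `c'` from the true mean
are excluded from the ambiguity set with probability at least `1 − 1/(MTΨ(c))`. -/
theorem ambiguity_set_subset_bounding_set_whp
    {Ω : Type*} [MeasurableSpace Ω] (P : Measure Ω) [IsProbabilityMeasure P]
    (n : ℕ) (X : Fin n → Ω → ℝ) (hX : ∀ i, Measurable (X i))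
    (hIndep : iIndepFun X P)
    {Θ : Type*} [Fintype Θ] (θ0 : Θ) (μ : Θ → ℝ)
    (hMean : ∀ i, (∫ ω, X i ω ∂P) = μ θ0)
    (v b : ℝ) (hv : 0 < v) (hb : 0 < b)
    (hInt : ∀ i, ∀ l : ℝ, |l| < 1 / b →
      Integrable (fun ω => Real.exp (l * (X i ω - μ θ0))) P)
    (hMGF : ∀ i, ∀ l : ℝ, |l| < 1 / b →
      (∫ ω, Real.exp (l * (X i ω - μ θ0)) ∂P) ≤ Real.exp (l ^ 2 * v ^ 2 / 2))
    (c : ℝ) (hc : 0 < c) (hsep : ∀ θ : Θ, θ ≠ θ0 → c ≤ |μ θ - μ θ0|)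
    (Ψ : ℝ) (hΨ : Ψ = min (c ^ 2 / (8 * v ^ 2)) (c / (4 * b)))
    (M T : ℝ) (hM : 0 < M) (hT : 0 < T) (hMT : Real.exp 1 ≤ 2 * M * T * Ψ)
    (L : ℝ) (hL : L = Real.log (2 * M * T * Ψ))
    (c' : ℝ) (hc' : c ≤ c')
    (Ψ' : ℝ) (hΨ' : Ψ' = min (c' ^ 2 / (8 * v ^ 2)) (c' / (4 * b)))
    (hn : (n : ℝ) ≥ L / Ψ')
    (Φ : ℝ) (hΦ : Φ = max (Real.sqrt (2 * v ^ 2 * L / n)) (2 * b * L / n)) :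
    P {ω | {θ : Θ | |(1 / (n : ℝ)) * (∑ i, X i ω) - μ θ| ≤ Φ} ⊆
        {θ0} ∪ {θ : Θ | |μ θ - μ θ0| ≤ c'}} ≥
      1 - ENNReal.ofReal (1 / (M * T * Ψ)) :=
  ambiguity_set_subset_bounding_set_whp_general P n X hX hIndep θ0 μ v b hv hb hInt hMGF c hc Ψ M T
    hMT L hL c' hc' Ψ' hΨ' hn Φ hΦ
end
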